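/- For every n ≥ 2, every bijection of the point set P of the incidence geometry G_n that maps lines onto lines is the restriction to P of a linear automorphism of V_n preserving the symplectic form; hence the automorphism group of G_n is isomorphic to Sp(2n,2). -/

import Mathlib

/-- The symplectic vector space `V_n = (ZMod 2)^(2n)` of the n-qubit real Pauli group. -/
abbrev V (n : ℕ) : Type := Fin (2 * n) → ZMod 2

/-- The index `2i-1` (0-based: `2i`). -/
def i0 {n : ℕ} (i : Fin n) : Fin (2 * n) := ⟨2 * i.1, by have := i.isLt; omega⟩

/-- The index `2i` (0-based: `2i+1`). -/
def i1 {n : ℕ} (i : Fin n) : Fin (2 * n) := ⟨2 * i.1 + 1, by have := i.isLt; omega⟩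

/-- The symplectic form `⟨x,y⟩ = Σ_{i=1}^n (x_{2i−1} y_{2i} + x_{2i} y_{2i−1})`. -/
def sform {n : ℕ} (x y : V n) : ZMod 2 :=
  ∑ i : Fin n, (x (i0 i) * y (i1 i) + x (i1 i) * y (i0 i))

/-- The point set `P = V_n \ {0}` of the incidence geometry `G_n`. -/
def P (n : ℕ) : Set (V n) := {x | x ≠ 0}

/-- The line set `L = {{a,b,a+b} : a,b ∈ P, a ≠ b, ⟨a,b⟩ = 0}` of `G_n`. -/
def Lines (n : ℕ) : Set (Set (V n)) :=
  {l | ∃ a b : V n, a ∈ P n ∧ b ∈ P n ∧ a ≠ b ∧ sform a b = 0 ∧ l = {a, b, a + b}}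

/-- A subset `H ⊆ P` satisfies condition (H1) if every line meets it in exactly
one point or is contained in it. -/
def IsH1 {n : ℕ} (H : Set (V n)) : Prop :=
  H ⊆ P n ∧ ∀ l ∈ Lines n, (H ∩ l).ncard = 1 ∨ l ⊆ H

/-- A geometric hyperplane: a subset satisfying (H1) which is not the full point set. -/
def IsHyperplane {n : ℕ} (H : Set (V n)) : Prop := IsH1 H ∧ H ≠ P n

/-- `A ⊞ B`: the complement in `P` of the symmetric difference of `A` and `B`. -/
def boxAdd {n : ℕ} (A B : Set (V n)) : Set (V n) := P n \ (symmDiff A B)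

/-- The quadratic form `Q_0(x) = Σ_{i=1}^n x_{2i−1} x_{2i}`. -/
def Q0 {n : ℕ} (x : V n) : ZMod 2 := ∑ i : Fin n, x (i0 i) * x (i1 i)

/-- The quadratic form `Q_p(x) = Q_0(x) + ⟨p,x⟩`. -/
def Qf {n : ℕ} (p x : V n) : ZMod 2 := Q0 x + sform p x

/-- The perp-set hyperplane `C_p = {x ∈ P : ⟨p,x⟩ = 0}`. -/
def Cset {n : ℕ} (p : V n) : Set (V n) := {x ∈ P n | sform p x = 0}

/-- The quadric hyperplane `H_p = {x ∈ P : Q_p(x) = 0}`. -/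
def Hset {n : ℕ} (p : V n) : Set (V n) := {x ∈ P n | Qf p x = 0}

/-- The symplectic transvection `t_p : x ↦ x + ⟨p,x⟩·p`. -/
def tv {n : ℕ} (p : V n) (x : V n) : V n := x + sform p x • p

/-!
A bijection of `P` that maps lines onto lines also maps lines onto lines under its inverse,
since it permutes the finite set of lines injectively. Two distinct points are orthogonal
exactly when they lie on a common line, so the bijection, extended by `0 ↦ 0`, preserves
orthogonality in both directions; as the form takes only the values `0` and `1`, it preserves
the form. A form-preserving bijection of a space with a nondegenerate form is additive, because
`⟨g (x + y), z⟩ = ⟨x + y, g⁻¹ z⟩ = ⟨g x + g y, z⟩`, hence `ZMod 2`-linear.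
-/

lemma Equiv.Perm.ofSubtype_image {α : Type*} {p : α → Prop} [DecidablePred p]
    (σ : Equiv.Perm (Subtype p)) {s : Set α} (hs : ∀ x ∈ s, p x) :
    Equiv.Perm.ofSubtype σ '' s = {y | ∃ x : Subtype p, (x : α) ∈ s ∧ y = (σ x : α)} := by
  ext y
  constructor
  · rintro ⟨x, hx, rfl⟩
    exact ⟨⟨x, hs x hx⟩, hx, Equiv.Perm.ofSubtype_apply_of_mem σ _⟩
  · rintro ⟨x, hx, rfl⟩
    exact ⟨x, hx, Equiv.Perm.ofSubtype_apply_coe σ x⟩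

section SymplecticForm

variable {n : ℕ}

lemma sform_comm (x y : V n) : sform x y = sform y x :=
  Finset.sum_congr rfl fun _ _ => by ring

lemma sform_self (x : V n) : sform x x = 0 :=
  Finset.sum_eq_zero fun _ _ => by rw [mul_comm]; exact CharTwo.add_self_eq_zero _

lemma sform_add_left (x y z : V n) : sform (x + y) z = sform x z + sform y z := by
  simp only [sform, Pi.add_apply, ← Finset.sum_add_distrib]
  exact Finset.sum_congr rfl fun _ _ => by ring

lemma sform_add_right (x y z : V n) : sform x (y + z) = sform x y + sform x z := by
  rw [sform_comm, sform_add_left, sform_comm y, sform_comm z]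

lemma sform_zero_left (z : V n) : sform 0 z = 0 := by
  simp [sform]

lemma sform_zero_right (z : V n) : sform z 0 = 0 := by
  rw [sform_comm, sform_zero_left]

lemma i0_injective : Function.Injective (i0 (n := n)) := fun i j h => by
  simpa [i0, Fin.ext_iff] using h

lemma i1_injective : Function.Injective (i1 (n := n)) := fun i j h => by
  simpa [i1, Fin.ext_iff] using h

lemma i0_ne_i1 (i j : Fin n) : i0 i ≠ i1 j := fun h => by
  simp only [i0, i1, Fin.ext_iff] at h
  omega

lemma exists_eq_i0_or_eq_i1 (k : Fin (2 * n)) : ∃ j, k = i0 j ∨ k = i1 j := by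
  refine ⟨⟨k / 2, by omega⟩, ?_⟩
  simp only [i0, i1, Fin.ext_iff]
  omega

lemma sform_single_i0 (x : V n) (j : Fin n) : sform x (Pi.single (i0 j) 1) = x (i1 j) := by
  simp [sform, Pi.single_apply, i0_injective.eq_iff, (i0_ne_i1 _ _).symm]

lemma sform_single_i1 (x : V n) (j : Fin n) : sform x (Pi.single (i1 j) 1) = x (i0 j) := by
  simp [sform, Pi.single_apply, i1_injective.eq_iff, i0_ne_i1]

lemma eq_of_forall_sform_eq {x y : V n} (h : ∀ z, sform x z = sform y z) : x = y := by
  funext k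
  obtain ⟨j, rfl | rfl⟩ := exists_eq_i0_or_eq_i1 k
  · simpa only [sform_single_i1] using h (Pi.single (i1 j) 1)
  · simpa only [sform_single_i0] using h (Pi.single (i0 j) 1)

lemma map_add_of_sform_map_map (g : V n ≃ V n) (hg : ∀ x y, sform (g x) (g y) = sform x y)
    (x y : V n) : g (x + y) = g x + g y := by
  refine eq_of_forall_sform_eq fun z => ?_
  obtain ⟨w, rfl⟩ := g.surjective z
  rw [hg, sform_add_left, sform_add_left, hg, hg]

end SymplecticForm

section Lines

variable {n : ℕ}

lemma add_ne_zero_of_ne {a b : V n} (hab : a ≠ b) : a + b ≠ 0 := fun h =>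
  hab (funext fun i => CharTwo.add_eq_zero.mp (congrFun h i))

lemma subset_P_of_mem_Lines {l : Set (V n)} (hl : l ∈ Lines n) : l ⊆ P n := by
  obtain ⟨a, b, ha, hb, hab, -, rfl⟩ := hl
  rintro x (rfl | rfl | rfl)
  exacts [ha, hb, add_ne_zero_of_ne hab]

lemma sform_eq_zero_of_mem_Lines {l : Set (V n)} (hl : l ∈ Lines n) {x y : V n}
    (hx : x ∈ l) (hy : y ∈ l) : sform x y = 0 := by
  obtain ⟨a, b, -, -, -, hab, rfl⟩ := hl
  have hba : sform b a = 0 := by rw [sform_comm, hab]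
  rcases hx with rfl | rfl | rfl <;> rcases hy with rfl | rfl | rfl <;>
    simp [sform_add_left, sform_add_right, sform_self, hab, hba]

lemma symm_image_mem_Lines {g : V n ≃ V n} (hg : ∀ l ∈ Lines n, g '' l ∈ Lines n) :
    ∀ l ∈ Lines n, g.symm '' l ∈ Lines n := by
  have hbij : Set.BijOn (g '' ·) (Lines n) (Lines n) :=
    ((Lines n).toFinite.injOn_iff_bijOn_of_mapsTo hg).mp
      (Set.image_injective.mpr g.injective).injOn
  intro l hl
  obtain ⟨m, hm, rfl⟩ := hbij.surjOn hl
  rwa [g.symm_image_image]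

lemma sform_map_map_eq_zero {g : V n ≃ V n} (hg0 : g 0 = 0)
    (hg : ∀ l ∈ Lines n, g '' l ∈ Lines n) {a b : V n} (h : sform a b = 0) :
    sform (g a) (g b) = 0 := by
  rcases eq_or_ne a 0 with rfl | ha
  · rw [hg0, sform_zero_left]
  rcases eq_or_ne b 0 with rfl | hb
  · rw [hg0, sform_zero_right]
  rcases eq_or_ne a b with rfl | hab
  · exact sform_self _
  have hl : ({a, b, a + b} : Set (V n)) ∈ Lines n := ⟨a, b, ha, hb, hab, h, rfl⟩
  exact sform_eq_zero_of_mem_Lines (hg _ hl) ⟨a, by simp, rfl⟩ ⟨b, by simp, rfl⟩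

lemma sform_map_map {g : V n ≃ V n} (hg0 : g 0 = 0) (hg : ∀ l ∈ Lines n, g '' l ∈ Lines n)
    (a b : V n) : sform (g a) (g b) = sform a b := by
  have hg0' : g.symm 0 = 0 := g.symm_apply_eq.mpr hg0.symm
  have hiff : sform (g a) (g b) = 0 ↔ sform a b = 0 := by
    refine ⟨fun h => ?_, sform_map_map_eq_zero hg0 hg⟩
    simpa using sform_map_map_eq_zero hg0' (symm_image_mem_Lines hg) h
  have eq_of_eq_zero_iff : ∀ z w : ZMod 2, (z = 0 ↔ w = 0) → z = w := by decide
  exact eq_of_eq_zero_iff _ _ hiff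

end Lines

def linearEquivOfSformMapMap {n : ℕ} (g : V n ≃ V n)
    (hg : ∀ x y, sform (g x) (g y) = sform x y) : V n ≃ₗ[ZMod 2] V n :=
  (AddEquiv.mk' g (map_add_of_sform_map_map g hg)).toLinearEquiv (ZMod.map_smul _)

theorem stmt12_general (n : ℕ) (σ : ↥(P n) ≃ ↥(P n))
    (hσ : ∀ l ∈ Lines n,
      {y : V n | ∃ x : ↥(P n), (x : V n) ∈ l ∧ y = (σ x : V n)} ∈ Lines n) :
    ∃! g : V n ≃ₗ[ZMod 2] V n,
      (∀ x y : V n, sform (g x) (g y) = sform x y) ∧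
      ∀ x : ↥(P n), (σ x : V n) = g (x : V n) := by
  classical
  set g : Equiv.Perm (V n) := Equiv.Perm.ofSubtype σ
  have hg0 : g 0 = 0 := Equiv.Perm.ofSubtype_apply_of_not_mem σ (by simp [P])
  have hg : ∀ l ∈ Lines n, g '' l ∈ Lines n := fun l hl => by
    rw [Equiv.Perm.ofSubtype_image σ (subset_P_of_mem_Lines hl)]
    exact hσ l hl
  have hform := sform_map_map hg0 hg
  refine ⟨linearEquivOfSformMapMap g hform,
    ⟨hform, fun x => (Equiv.Perm.ofSubtype_apply_coe σ x).symm⟩, ?_⟩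
  rintro f ⟨-, hf⟩
  refine LinearEquiv.ext fun x => ?_
  rcases eq_or_ne x 0 with rfl | hx
  · rw [map_zero, map_zero]
  · exact (hf ⟨x, hx⟩).symm.trans (Equiv.Perm.ofSubtype_apply_coe σ ⟨x, hx⟩).symm

theorem stmt12 (n : ℕ) (hn : 2 ≤ n) (σ : ↥(P n) ≃ ↥(P n))
    (hσ : ∀ l ∈ Lines n,
      {y : V n | ∃ x : ↥(P n), (x : V n) ∈ l ∧ y = (σ x : V n)} ∈ Lines n) :
    ∃! g : V n ≃ₗ[ZMod 2] V n,
      (∀ x y : V n, sform (g x) (g y) = sform x y) ∧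
      ∀ x : ↥(P n), (σ x : V n) = g (x : V n) :=
  stmt12_general n σ hσ
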